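/- Let Γ be a finite simple graph, B an anticonnected subset of V(Γ), and g a contraction element of B in A(Γ). Then any reduced word representing a nonzero power gᵐ (m ≠ 0) is a contraction word of B; in particular gᵐ is a contraction element of B. -/

import Mathlib

open SimpleGraph

variable {V : Type*}

/-- Relators of the right-angled Artin group on a graph. -/
def raagRels (G : SimpleGraph V) : Set (FreeGroup V) :=
  {r | ∃ a b : V, G.Adj a b ∧
    r = FreeGroup.of a * FreeGroup.of b * (FreeGroup.of a)⁻¹ * (FreeGroup.of b)⁻¹}

/-- The right-angled Artin group on a graph. -/
def RAAG (G : SimpleGraph V) : Type _ := PresentedGroup (raagRels G)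

instance (G : SimpleGraph V) : Group (RAAG G) := by unfold RAAG; infer_instance

/-- The generator of `RAAG G` corresponding to a vertex. -/
def RAAG.gen (G : SimpleGraph V) (v : V) : RAAG G := PresentedGroup.of v

/-- The element of `RAAG G` represented by a word. -/
def wordProd (G : SimpleGraph V) (w : List (V × Bool)) : RAAG G :=
  (w.map fun p => if p.2 then RAAG.gen G p.1 else (RAAG.gen G p.1)⁻¹).prod

/-- A word is reduced if no shorter word represents the same element. -/
def IsReducedWord (G : SimpleGraph V) (w : List (V × Bool)) : Prop :=
  ∀ w' : List (V × Bool), wordProd G w' = wordProd G w → w.length ≤ w'.length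

/-- `B` is anticonnected in `G` if it induces a connected subgraph of the complement. -/
def Anticonnected (G : SimpleGraph V) (B : Set V) : Prop :=
  ((Gᶜ).induce B).Connected

/-- Contraction of a graph relative to a set `B` of vertices: `B` collapses to
the vertex `none`. -/
def SimpleGraph.contract (G : SimpleGraph V) (B : Set V) :
    SimpleGraph (Option {v : V // v ∉ B}) where
  Adj x y :=
    match x, y with
    | some q, some q' => G.Adj q.1 q'.1
    | some q, none => ∃ b ∈ B, G.Adj q.1 b
    | none, some q => ∃ b ∈ B, G.Adj q.1 b
    | none, none => False
  symm := by
    constructor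
    rintro (_|q) (_|q') h
    · exact h
    · exact h
    · exact h
    · exact G.adj_symm h
  loopless := by
    constructor
    rintro (_|q) h
    · exact h
    · exact G.loopless.irrefl _ h

/-- Co-contraction of a graph relative to a set `B` of vertices: `B` collapses to
the vertex `none`, which is joined to the common neighbors of `B`. -/
def SimpleGraph.coContract (G : SimpleGraph V) (B : Set V) :
    SimpleGraph (Option {v : V // v ∉ B}) where
  Adj x y :=
    match x, y with
    | some q, some q' => G.Adj q.1 q'.1
    | some q, none => ∀ b ∈ B, G.Adj q.1 b
    | none, some q => ∀ b ∈ B, G.Adj q.1 b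
    | none, none => False
  symm := by
    constructor
    rintro (_|q) (_|q') h
    · exact h
    · exact h
    · exact h
    · exact G.adj_symm h
  loopless := by
    constructor
    rintro (_|q) h
    · exact h
    · exact G.loopless.irrefl _ h

/-- The formal inverse of a word. -/
def wordInv (w : List (V × Bool)) : List (V × Bool) :=
  w.reverse.map fun p => (p.1, !p.2)

/-- The word obtained by concatenating `m` copies of `v` (or `|m|` copies of the
inverse word when `m < 0`). -/
def wordZPow (v : List (V × Bool)) : ℤ → List (V × Bool)
  | Int.ofNat m => (List.replicate m v).flatten
  | Int.negSucc m => (List.replicate (m + 1) (wordInv v)).flatten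

/-- A sequence of vertices of `B` is a contraction sequence if for every pair
`b, b'` of vertices of `B` it has a subsequence which is a path from `b` to `b'`
in the complement graph. -/
def IsContractionSeq (G : SimpleGraph V) (B : Set V) (bs : List V) : Prop :=
  ∀ b ∈ B, ∀ b' ∈ B, ∃ l : List V, l.Sublist bs ∧ l.head? = some b ∧
    l.getLast? = some b' ∧ l.Chain' (fun x y => x ≠ y ∧ ¬ G.Adj x y)

/-- A contraction word of `B`: a reduced word with letters in `B^{±1}` whose
sequence of letters is a contraction sequence. -/
def IsContractionWord (G : SimpleGraph V) (B : Set V) (w : List (V × Bool)) : Prop :=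
  IsReducedWord G w ∧ (∀ p ∈ w, p.1 ∈ B) ∧ IsContractionSeq G B (w.map Prod.fst)

/-- A contraction element of `B` is one represented by a contraction word of `B`. -/
def IsContractionElem (G : SimpleGraph V) (B : Set V) (g : RAAG G) : Prop :=
  ∃ w : List (V × Bool), IsContractionWord G B w ∧ wordProd G w = g

-- ===================== new development =====================
namespace CW

variable {G : SimpleGraph V}

/-- single letter inverse -/
def linv (p : V × Bool) : V × Bool := (p.1, !p.2)

@[simp] lemma linv_linv (p : V × Bool) : linv (linv p) = p := by
  cases p with | mk v e => simp [linv]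

@[simp] lemma linv_fst (p : V × Bool) : (linv p).1 = p.1 := rfl

/-- the letter as a group element -/
def L (G : SimpleGraph V) (p : V × Bool) : RAAG G :=
  if p.2 then RAAG.gen G p.1 else (RAAG.gen G p.1)⁻¹

lemma wordProd_eq (w : List (V × Bool)) : wordProd G w = (w.map (L G)).prod := by
  unfold wordProd L; rfl

@[simp] lemma wordProd_nil : wordProd G [] = 1 := rfl

lemma wordProd_cons (p : V × Bool) (w : List (V × Bool)) :
    wordProd G (p :: w) = L G p * wordProd G w := by
  simp [wordProd_eq]

lemma wordProd_append (u w : List (V × Bool)) :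
    wordProd G (u ++ w) = wordProd G u * wordProd G w := by
  simp [wordProd_eq]

@[simp] lemma L_linv (p : V × Bool) : L G (linv p) = (L G p)⁻¹ := by
  cases p with | mk v e => cases e <;> simp [L, linv]

open scoped commutatorElement in
lemma gen_commute {a b : V} (h : G.Adj a b) :
    Commute (RAAG.gen G a) (RAAG.gen G b) := by
  have hrel : (FreeGroup.of a * FreeGroup.of b * (FreeGroup.of a)⁻¹ * (FreeGroup.of b)⁻¹ :
      FreeGroup V) ∈ Subgroup.normalClosure (raagRels G) :=
    Subgroup.subset_normalClosure ⟨a, b, h, rfl⟩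
  have h1 : PresentedGroup.mk (raagRels G)
      (FreeGroup.of a * FreeGroup.of b * (FreeGroup.of a)⁻¹ * (FreeGroup.of b)⁻¹) = 1 :=
    (QuotientGroup.eq_one_iff _).2 hrel
  have h2 : ⁅RAAG.gen G a, RAAG.gen G b⁆ = 1 := by
    rw [commutatorElement_def]
    simp only [RAAG.gen, PresentedGroup.of]
    simp only [map_mul, map_inv] at h1
    exact h1
  exact commutatorElement_eq_one_iff_commute.mp h2

lemma L_commute {p q : V × Bool} (h : G.Adj p.1 q.1) :
    Commute (L G p) (L G q) := by
  have := gen_commute h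
  cases p with | mk a e => cases q with | mk b f =>
  cases e <;> cases f <;> simp [L] <;>
    first
      | exact this
      | exact this.inv_left
      | exact this.inv_right
      | exact this.inv_left.inv_right

lemma wordProd_wordInv (w : List (V × Bool)) :
    wordProd G (wordInv w) = (wordProd G w)⁻¹ := by
  induction w with
  | nil => simp [wordInv]
  | cons p w ih =>
      have : wordInv (p :: w) = wordInv w ++ [linv p] := by
        simp [wordInv, linv]
      rw [this, wordProd_append, ih]
      simp [wordProd_cons, mul_inv_rev]

lemma wordInv_cons (p : V × Bool) (w : List (V × Bool)) :
    wordInv (p :: w) = wordInv w ++ [linv p] := by simp [wordInv, linv]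

@[simp] lemma wordInv_nil : wordInv ([] : List (V × Bool)) = [] := rfl

lemma wordInv_append (u w : List (V × Bool)) :
    wordInv (u ++ w) = wordInv w ++ wordInv u := by simp [wordInv]

lemma wordInv_length (w : List (V × Bool)) : (wordInv w).length = w.length := by
  simp [wordInv]

lemma map_fst_wordInv (w : List (V × Bool)) :
    (wordInv w).map Prod.fst = (w.map Prod.fst).reverse := by
  simp [wordInv]

/-- every element is represented by a word -/
lemma exists_word (g : RAAG G) : ∃ w : List (V × Bool), wordProd G w = g := by
  obtain ⟨x, rfl⟩ := QuotientGroup.mk'_surjective (Subgroup.normalClosure (raagRels G)) g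
  induction x using FreeGroup.induction_on with
  | C1 => exact ⟨[], by simp; rfl⟩
  | of v => exact ⟨[(v, true)], by simp [wordProd_cons, L]; rfl⟩
  | inv_of v _ =>
      exact ⟨[(v, false)], by
        rw [show ((v, false) :: [] : List (V × Bool)) = [(v,false)] from rfl, wordProd_cons]
        simp [L]
        rfl⟩
  | mul x y hx hy =>
      obtain ⟨wx, hwx⟩ := hx
      obtain ⟨wy, hwy⟩ := hy
      exact ⟨wx ++ wy, by rw [wordProd_append, hwx, hwy]; rfl⟩

/-- every element has a reduced word -/
lemma exists_reducedWord (g : RAAG G) :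
    ∃ w : List (V × Bool), IsReducedWord G w ∧ wordProd G w = g := by
  classical
  have hne : ∃ n, ∃ w : List (V × Bool), w.length = n ∧ wordProd G w = g := by
    obtain ⟨w, hw⟩ := exists_word (G := G) g
    exact ⟨w.length, w, rfl, hw⟩
  obtain ⟨w, hwl, hw⟩ := Nat.find_spec hne
  refine ⟨w, ?_, hw⟩
  intro w' hw'
  rw [hwl]
  exact Nat.find_le ⟨w', rfl, hw'.trans hw⟩

end CW

-- chunk 2 : appended to base for testing
namespace CW

variable {G : SimpleGraph V}

/-- a "shuffle pair": a cancellable pair up to commutations -/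
def SP (G : SimpleGraph V) (w : List (V × Bool)) : Prop :=
  ∃ (w₁ w₂ w₃ : List (V × Bool)) (v : V) (e : Bool),
    w = w₁ ++ ((v, e) :: (w₂ ++ (v, !e) :: w₃)) ∧ ∀ p ∈ w₂, G.Adj v p.1

/-- swap of two adjacent commuting letters -/
def SwapStep (G : SimpleGraph V) (w w' : List (V × Bool)) : Prop :=
  ∃ (u t : List (V × Bool)) (a b : V × Bool), G.Adj a.1 b.1 ∧
    w = u ++ a :: b :: t ∧ w' = u ++ b :: a :: t

/-- shuffle equivalence -/
def SE (G : SimpleGraph V) : List (V × Bool) → List (V × Bool) → Prop :=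
  Relation.ReflTransGen (SwapStep G)

lemma SwapStep.symm {w w' : List (V × Bool)} (h : SwapStep G w w') : SwapStep G w' w := by
  obtain ⟨u, t, a, b, hab, rfl, rfl⟩ := h
  exact ⟨u, t, b, a, hab.symm, rfl, rfl⟩

lemma SE.refl (w : List (V × Bool)) : SE G w w := Relation.ReflTransGen.refl

lemma SE.trans {w₁ w₂ w₃ : List (V × Bool)} (h : SE G w₁ w₂) (h' : SE G w₂ w₃) :
    SE G w₁ w₃ := Relation.ReflTransGen.trans h h'

lemma SE.symm {w w' : List (V × Bool)} (h : SE G w w') : SE G w' w :=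
  by
  induction h with
  | refl => exact Relation.ReflTransGen.refl
  | tail _ hs ih => exact Relation.ReflTransGen.head hs.symm ih

lemma SwapStep.se {w w' : List (V × Bool)} (h : SwapStep G w w') : SE G w w' :=
  Relation.ReflTransGen.single h

lemma SwapStep.perm {w w' : List (V × Bool)} (h : SwapStep G w w') : w.Perm w' := by
  obtain ⟨u, t, a, b, _, rfl, rfl⟩ := h
  exact (List.Perm.append_left u (List.Perm.swap b a t))

lemma SE.perm {w w' : List (V × Bool)} (h : SE G w w') : w.Perm w' := by
  induction h with
  | refl => exact List.Perm.refl _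
  | tail _ hstep ih => exact ih.trans hstep.perm

lemma SE.length {w w' : List (V × Bool)} (h : SE G w w') : w.length = w'.length :=
  h.perm.length_eq

lemma SE.mem {w w' : List (V × Bool)} (h : SE G w w') {p} (hp : p ∈ w) : p ∈ w' :=
  (h.perm.mem_iff).1 hp

lemma SwapStep.wordProd {w w' : List (V × Bool)} (h : SwapStep G w w') :
    wordProd G w = wordProd G w' := by
  obtain ⟨u, t, a, b, hab, rfl, rfl⟩ := h
  rw [wordProd_append, wordProd_append, wordProd_cons, wordProd_cons,
    wordProd_cons, wordProd_cons]
  congr 1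
  rw [← mul_assoc, ← mul_assoc, (L_commute hab).eq]

lemma SE.wordProd {w w' : List (V × Bool)} (h : SE G w w') :
    wordProd G w = wordProd G w' := by
  induction h with
  | refl => rfl
  | tail _ hstep ih => exact ih.trans hstep.wordProd

lemma SwapStep.append_left {w w' : List (V × Bool)} (l : List (V × Bool))
    (h : SwapStep G w w') : SwapStep G (l ++ w) (l ++ w') := by
  obtain ⟨u, t, a, b, hab, rfl, rfl⟩ := h
  exact ⟨l ++ u, t, a, b, hab, by simp, by simp⟩

lemma SwapStep.append_right {w w' : List (V × Bool)} (l : List (V × Bool))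
    (h : SwapStep G w w') : SwapStep G (w ++ l) (w' ++ l) := by
  obtain ⟨u, t, a, b, hab, rfl, rfl⟩ := h
  exact ⟨u, t ++ l, a, b, hab, by simp, by simp⟩

lemma SE.append_left {w w' : List (V × Bool)} (l : List (V × Bool)) (h : SE G w w') :
    SE G (l ++ w) (l ++ w') :=
  Relation.ReflTransGen.lift (l ++ ·) (fun _ _ hs => hs.append_left l) _ _ h

lemma SE.append_right {w w' : List (V × Bool)} (l : List (V × Bool)) (h : SE G w w') :
    SE G (w ++ l) (w' ++ l) :=
  Relation.ReflTransGen.lift (· ++ l) (fun _ _ hs => hs.append_right l) _ _ h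

lemma SE.cons {w w' : List (V × Bool)} (p : V × Bool) (h : SE G w w') :
    SE G (p :: w) (p :: w') := by
  simpa using h.append_left [p]

lemma SE.map_linv {w w' : List (V × Bool)} (h : SE G w w') :
    SE G (w.map linv) (w'.map linv) := by
  refine Relation.ReflTransGen.lift (List.map linv) (fun x y hs => ?_) _ _ h
  obtain ⟨u, t, a, b, hab, rfl, rfl⟩ := hs
  exact ⟨u.map linv, t.map linv, linv a, linv b, by simpa using hab, by simp, by simp⟩

/-- moving a letter to the front over letters it commutes with -/
lemma se_to_front {t r : List (V × Bool)} {x : V × Bool}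
    (ht : ∀ p ∈ t, G.Adj x.1 p.1) : SE G (t ++ x :: r) (x :: (t ++ r)) := by
  induction t with
  | nil => exact SE.refl _
  | cons q t ih =>
      have h1 : SwapStep G (q :: x :: (t ++ r)) (x :: q :: (t ++ r)) :=
        ⟨[], t ++ r, q, x, (ht q (by simp)).symm, by simp, by simp⟩
      have h2 : SE G (q :: (t ++ x :: r)) (q :: (x :: (t ++ r))) :=
        (ih (fun p hp => ht p (by simp [hp]))).cons q
      exact (h2.trans h1.se)

/-- moving a letter to the back over letters it commutes with -/
lemma se_to_back {t r : List (V × Bool)} {x : V × Bool}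
    (ht : ∀ p ∈ t, G.Adj x.1 p.1) : SE G (x :: (t ++ r)) (t ++ x :: r) :=
  (se_to_front ht).symm

/-- three-way split of `A ++ z :: B = C ++ z' :: D` -/
lemma append_cons_split {α : Type*} {A B C D : List α} {z z' : α}
    (h : A ++ z :: B = C ++ z' :: D) :
    (∃ E, C = A ++ z :: E ∧ B = E ++ z' :: D) ∨ (A = C ∧ z = z' ∧ B = D) ∨
      (∃ E, A = C ++ z' :: E ∧ D = E ++ z :: B) := by
  rcases List.append_eq_append_iff.mp h with ⟨a', ha1, ha2⟩ | ⟨c', hc1, hc2⟩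
  · cases a' with
    | nil =>
        simp only [List.append_nil] at ha1
        obtain ⟨hz, hD⟩ := List.cons.inj ha2
        exact Or.inr (Or.inl ⟨ha1.symm, hz, hD⟩)
    | cons y a'' =>
        obtain ⟨hz, hB⟩ := List.cons.inj ha2
        subst hz
        exact Or.inl ⟨a'', by rw [ha1], hB⟩
  · cases c' with
    | nil =>
        simp only [List.append_nil] at hc1
        obtain ⟨hz, hD⟩ := List.cons.inj hc2
        exact Or.inr (Or.inl ⟨hc1, hz.symm, hD.symm⟩)
    | cons y c'' =>
        obtain ⟨hz, hD⟩ := List.cons.inj hc2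
        subst hz
        exact Or.inr (Or.inr ⟨c'', hc1, hD⟩)

/-- split of `P ++ Q = w₁ ++ z :: w₂` : the letter z is in P or in Q -/
lemma eq_append_cons_split {α : Type*} {P Q w₁ w₂ : List α} {z : α}
    (h : P ++ Q = w₁ ++ z :: w₂) :
    (∃ E₁ E₂, P = E₁ ++ z :: E₂ ∧ w₁ = E₁ ∧ w₂ = E₂ ++ Q) ∨
      (∃ F₁ F₂, Q = F₁ ++ z :: F₂ ∧ w₁ = P ++ F₁ ∧ w₂ = F₂) := by
  rcases List.append_eq_append_iff.mp h with ⟨a', ha1, ha2⟩ | ⟨c', hc1, hc2⟩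
  · exact Or.inr ⟨a', w₂, ha2, by rw [ha1], rfl⟩
  · cases c' with
    | nil =>
        simp only [List.append_nil] at hc1
        exact Or.inr ⟨[], w₂, hc2.symm, by simp [hc1], rfl⟩
    | cons y c'' =>
        obtain ⟨hz, hD⟩ := List.cons.inj hc2
        subst hz
        exact Or.inl ⟨w₁, c'', hc1, rfl, hD⟩

lemma SP.append_right {w : List (V × Bool)} (r : List (V × Bool)) (h : SP G w) :
    SP G (w ++ r) := by
  obtain ⟨w₁, w₂, w₃, v, e, rfl, hadj⟩ := h
  exact ⟨w₁, w₂, w₃ ++ r, v, e, by simp, hadj⟩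

lemma SP.append_left {w : List (V × Bool)} (l : List (V × Bool)) (h : SP G w) :
    SP G (l ++ w) := by
  obtain ⟨w₁, w₂, w₃, v, e, rfl, hadj⟩ := h
  exact ⟨l ++ w₁, w₂, w₃, v, e, by simp, hadj⟩

lemma SP.cons {w : List (V × Bool)} (p : V × Bool) (h : SP G w) : SP G (p :: w) := by
  simpa using h.append_left [p]

lemma sp_cons_iff {c : V × Bool} {l : List (V × Bool)} :
    SP G (c :: l) ↔
      (∃ w₂ w₃, l = w₂ ++ (c.1, !c.2) :: w₃ ∧ ∀ p ∈ w₂, G.Adj c.1 p.1) ∨ SP G l := by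
  constructor
  · rintro ⟨w₁, w₂, w₃, v, e, heq, hadj⟩
    cases w₁ with
    | nil =>
        simp only [List.nil_append] at heq
        obtain ⟨hc, hl⟩ := List.cons.inj heq
        subst hl
        subst hc
        exact Or.inl ⟨w₂, w₃, by simp, by simpa using hadj⟩
    | cons d w₁' =>
        obtain ⟨hc, hl⟩ := List.cons.inj heq
        exact Or.inr ⟨w₁', w₂, w₃, v, e, hl, hadj⟩
  · rintro (⟨w₂, w₃, rfl, hadj⟩ | h)
    · exact ⟨[], w₂, w₃, c.1, c.2, by simp, hadj⟩
    · exact h.cons c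

/-- the main splitting lemma for shuffle pairs on a concatenation -/
lemma sp_split {P Q : List (V × Bool)} (h : SP G (P ++ Q)) :
    SP G P ∨ SP G Q ∨
      ∃ (v : V) (e : Bool) (P₁ P₂ Q₁ Q₂ : List (V × Bool)),
        P = P₁ ++ (v, e) :: P₂ ∧ Q = Q₁ ++ (v, !e) :: Q₂ ∧
        (∀ p ∈ P₂, G.Adj v p.1) ∧ (∀ p ∈ Q₁, G.Adj v p.1) := by
  obtain ⟨w₁, w₂, w₃, v, e, heq, hadj⟩ := h
  rcases eq_append_cons_split heq with ⟨E₁, E₂, hP, hw₁, hw₂⟩ | ⟨F₁, F₂, hQ, hw₁, hw₂⟩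
  · have heq2 : E₂ ++ Q = w₂ ++ (v, !e) :: w₃ := hw₂.symm
    rcases eq_append_cons_split heq2 with ⟨K₁, K₂, hE₂, hww₁, hww₂⟩ | ⟨F₁, F₂, hQ, hww₁, hww₂⟩
    · left
      refine ⟨E₁, K₁, K₂, v, e, ?_, ?_⟩
      · rw [hP, hE₂]
      · intro p hp; exact hadj p (by rw [hww₁]; exact hp)
    · right; right
      refine ⟨v, e, E₁, E₂, F₁, F₂, hP, hQ, ?_, ?_⟩
      · intro p hp; exact hadj p (by rw [hww₁]; exact List.mem_append_left _ hp)
      · intro p hp; exact hadj p (by rw [hww₁]; exact List.mem_append_right _ hp)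
  · right; left
    exact ⟨F₁, w₂, w₃, v, e, by rw [hQ, hw₂], hadj⟩

end CW
namespace CW

variable {G : SimpleGraph V}

lemma wordInv_eq_map (w : List (V × Bool)) : wordInv w = w.reverse.map linv := rfl

lemma mem_wordInv {p : V × Bool} {w : List (V × Bool)} :
    p ∈ wordInv w ↔ ∃ q ∈ w, p = linv q := by
  simp [wordInv_eq_map, eq_comm]

lemma SwapStep.sp {w w' : List (V × Bool)} (h : SwapStep G w w') (hsp : SP G w) :
    SP G w' := by
  obtain ⟨u, t, a, b, hab, rfl, rfl⟩ := h
  rcases sp_split hsp with hu | hq | ⟨v, e, P₁, P₂, Q₁, Q₂, hP, hQ, hP₂, hQ₁⟩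
  · exact hu.append_right _
  · -- pattern inside a :: b :: t
    rcases sp_cons_iff.mp hq with ⟨w₂, w₃, heq, hadj⟩ | h2
    · cases w₂ with
      | nil =>
          simp only [List.nil_append] at heq
          obtain ⟨hb, -⟩ := List.cons.inj heq
          exact absurd (by rw [hb] at hab; exact hab) (G.loopless.irrefl a.1)
      | cons q w₂' =>
          obtain ⟨hqb, ht⟩ := List.cons.inj heq
          subst ht
          refine SP.append_left u ⟨[b], w₂', w₃, a.1, a.2, ?_, ?_⟩
          · simp
          · intro p hp; exact hadj p (by simp [hp])
    · rcases sp_cons_iff.mp h2 with ⟨w₂, w₃, heq, hadj⟩ | h3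
      · subst heq
        refine SP.append_left u ⟨[], a :: w₂, w₃, b.1, b.2, by simp, ?_⟩
        intro p hp
        rcases List.mem_cons.mp hp with rfl | hp
        · exact hab.symm
        · exact hadj p hp
      · exact SP.append_left u ((h3.cons a).cons b)
  · -- cross case
    cases Q₁ with
    | nil =>
        simp only [List.nil_append] at hQ
        obtain ⟨ha, hQ₂⟩ := List.cons.inj hQ
        subst hP hQ₂ ha
        refine ⟨P₁, P₂ ++ [b], t, v, e, by simp, ?_⟩
        intro p hp
        rcases List.mem_append.mp hp with hp | hp
        · exact hP₂ p hp
        · have : p = b := by simpa using hp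
          subst this
          simpa using hab
    | cons q Q₁' =>
        obtain ⟨hqa, hQ'⟩ := List.cons.inj hQ
        subst hqa
        cases Q₁' with
        | nil =>
            have hQ'' : b :: t = (v, !e) :: Q₂ := by simpa using hQ'
            obtain ⟨hb, ht⟩ := List.cons.inj hQ''
            subst hP ht hb
            exact ⟨P₁, P₂, a :: t, v, e, by simp, hP₂⟩
        | cons r Q₁'' =>
            obtain ⟨hrb, ht⟩ := List.cons.inj hQ'
            subst hP ht hrb
            refine ⟨P₁, P₂ ++ (b :: a :: Q₁''), Q₂, v, e, by simp, ?_⟩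
            intro p hp
            simp only [List.mem_append, List.mem_cons] at hp
            rcases hp with hp | rfl | rfl | hp
            · exact hP₂ p hp
            · exact hQ₁ _ (by simp)
            · exact hQ₁ _ (by simp)
            · exact hQ₁ _ (by simp [hp])
section
variable {w w' : List (V × Bool)}

lemma SE.sp (h : SE G w w') (hsp : SP G w) : SP G w' := by
  induction h with
  | refl => exact hsp
  | tail _ hstep ih => exact hstep.sp ih

lemma SE.sp_iff (h : SE G w w') : SP G w ↔ SP G w' :=
  ⟨h.sp, h.symm.sp⟩

end

lemma sp_wordInv {w : List (V × Bool)} (h : SP G w) : SP G (wordInv w) := by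
  obtain ⟨w₁, w₂, w₃, v, e, rfl, hadj⟩ := h
  refine ⟨wordInv w₃, wordInv w₂, wordInv w₁, v, e, ?_, ?_⟩
  · simp [wordInv_append, wordInv_cons, linv, List.append_assoc]
  · intro p hp
    obtain ⟨q, hq, rfl⟩ := mem_wordInv.mp hp
    simpa using hadj q hq

lemma sp_wordInv_iff {w : List (V × Bool)} : SP G (wordInv w) ↔ SP G w := by
  constructor
  · intro h
    have := sp_wordInv h
    rwa [show wordInv (wordInv w) = w by
      simp [wordInv_eq_map, List.map_reverse, Function.comp_def] ] at this
  · exact sp_wordInv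

lemma nosp_of_nosp_append {l w r : List (V × Bool)} (h : ¬ SP G (l ++ w ++ r)) :
    ¬ SP G w := fun hw => h ((hw.append_left l).append_right r)

lemma nosp_cons {p : V × Bool} {w : List (V × Bool)} (h : ¬ SP G (p :: w)) : ¬ SP G w :=
  fun hw => h (hw.cons p)

end CW
namespace CW

variable {G : SimpleGraph V}

open Classical in
/-- push a letter onto a partially commutative stack (head = most recent letter) -/
noncomputable def pushR (G : SimpleGraph V) (x : V × Bool) :
    List (V × Bool) → List (V × Bool)
  | [] => [x]
  | y :: s =>
      if G.Adj y.1 x.1 then y :: pushR G x s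
      else if y = linv x then s
      else x :: y :: s

@[simp] lemma pushR_nil (x : V × Bool) : pushR G x [] = [x] := rfl

lemma pushR_cons_adj {x y : V × Bool} (s : List (V × Bool)) (h : G.Adj y.1 x.1) :
    pushR G x (y :: s) = y :: pushR G x s := by
  simp [pushR, h]

lemma pushR_cons_del {x y : V × Bool} (s : List (V × Bool)) (h : ¬ G.Adj y.1 x.1)
    (h2 : y = linv x) : pushR G x (y :: s) = s := by
  simp [pushR, h, h2]

lemma pushR_cons_ins {x y : V × Bool} (s : List (V × Bool)) (h : ¬ G.Adj y.1 x.1)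
    (h2 : y ≠ linv x) : pushR G x (y :: s) = x :: y :: s := by
  simp [pushR, h, h2]

lemma pushR_length (x : V × Bool) (s : List (V × Bool)) :
    (pushR G x s).length ≤ s.length + 1 := by
  induction s with
  | nil => simp
  | cons y s ih =>
      by_cases h : G.Adj y.1 x.1
      · rw [pushR_cons_adj s h]; simpa using Nat.succ_le_succ ih
      · by_cases h2 : y = linv x
        · rw [pushR_cons_del s h h2]; simp; omega
        · rw [pushR_cons_ins s h h2]; simp

/-- structure of a push: either an insertion or a cancellation -/
lemma pushR_cases (x : V × Bool) (s : List (V × Bool)) :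
    (∃ t r, s = t ++ r ∧ (∀ p ∈ t, G.Adj p.1 x.1) ∧ pushR G x s = t ++ x :: r ∧
      (∀ z ∈ r.head?, ¬ G.Adj z.1 x.1 ∧ z ≠ linv x)) ∨
    (∃ t r, s = t ++ (linv x :: r) ∧ (∀ p ∈ t, G.Adj p.1 x.1) ∧ pushR G x s = t ++ r) := by
  induction s with
  | nil => exact Or.inl ⟨[], [], by simp, by simp, by simp, by simp⟩
  | cons y s ih =>
      by_cases h : G.Adj y.1 x.1
      · rcases ih with ⟨t, r, hs, ht, hp, hr⟩ | ⟨t, r, hs, ht, hp⟩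
        · exact Or.inl ⟨y :: t, r, by simp [hs], by
            intro p hp'
            rcases List.mem_cons.mp hp' with rfl | hp'
            exacts [h, ht p hp'], by rw [pushR_cons_adj s h, hp]; simp, hr⟩
        · exact Or.inr ⟨y :: t, r, by simp [hs], by
            intro p hp'
            rcases List.mem_cons.mp hp' with rfl | hp'
            exacts [h, ht p hp'], by rw [pushR_cons_adj s h, hp]; simp⟩
      · by_cases h2 : y = linv x
        · exact Or.inr ⟨[], s, by simp [h2], by simp, by simp [pushR_cons_del s h h2]⟩
        · exact Or.inl ⟨[], y :: s, by simp, by simp,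
            by simp [pushR_cons_ins s h h2], by simp [h, h2]⟩

lemma pushR_wordProd (x : V × Bool) (s : List (V × Bool)) :
    wordProd G (pushR G x s).reverse = wordProd G s.reverse * L G x := by
  induction s with
  | nil => simp [wordProd_cons]
  | cons y s ih =>
      by_cases h : G.Adj y.1 x.1
      · rw [pushR_cons_adj s h]
        simp only [List.reverse_cons, wordProd_append, ih]
        simp only [wordProd_cons, wordProd_nil, mul_one, mul_assoc]
        rw [(L_commute (G := G) (p := x) (q := y) (h.symm)).eq]
      · by_cases h2 : y = linv x
        · rw [pushR_cons_del s h h2, h2]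
          simp [wordProd_append, wordProd_cons, mul_assoc]
        · rw [pushR_cons_ins s h h2]
          simp [wordProd_append, wordProd_cons, mul_assoc]

/-- removing a letter from a word with a shuffle pair either keeps a shuffle pair
or the letter is one of the endpoints -/
lemma sp_middle_split {A B : List (V × Bool)} {z : V × Bool}
    (h : SP G (A ++ z :: B)) :
    SP G (A ++ B) ∨
      (∃ A₁ A₂, A = A₁ ++ ((z.1, !z.2) :: A₂) ∧ ∀ p ∈ A₂, G.Adj z.1 p.1) ∨
      (∃ B₁ B₂, B = B₁ ++ ((z.1, !z.2) :: B₂) ∧ ∀ p ∈ B₁, G.Adj z.1 p.1) := by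
  obtain ⟨w₁, w₂, w₃, v, e, heq, hadj⟩ := h
  have heq' : A ++ z :: B = w₁ ++ (v, e) :: (w₂ ++ (v, !e) :: w₃) := heq
  rcases append_cons_split heq' with ⟨E, hw₁, hB⟩ | ⟨hA, hz, hB⟩ | ⟨E, hA, hD⟩
  · -- z strictly before the first endpoint : pattern inside B
    left
    rw [hB]
    exact (SP.append_left _ ⟨E, w₂, w₃, v, e, rfl, hadj⟩)
  · -- z is the first endpoint
    right; right
    refine ⟨w₂, w₃, ?_, ?_⟩
    · rw [hB]
      have h1 : z.1 = v := by rw [hz]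
      have h2 : z.2 = e := by rw [hz]
      rw [h1, h2]
    · intro p hp
      have h1 : z.1 = v := by rw [hz]
      rw [h1]; exact hadj p hp
  · -- z after the first endpoint
    rcases append_cons_split hD with ⟨E₀, hE, hw₃⟩ | ⟨hE, hz, hB⟩ | ⟨E₀, hw₂, hB⟩
    · -- z after the second endpoint : pattern inside A
      left
      rw [hA, hE]
      exact SP.append_right _ ⟨w₁, w₂, E₀, v, e, by simp, hadj⟩
    · -- z is the second endpoint
      right; left
      have h1 : z.1 = v := by rw [← hz]
      have h2 : z.2 = !e := by rw [← hz]
      refine ⟨w₁, E, ?_, ?_⟩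
      · rw [hA, h1, h2, Bool.not_not]
      · intro p hp
        rw [h1]
        exact hadj p (by rw [hE]; exact hp)
    · -- z strictly between the endpoints
      left
      refine ⟨w₁, E ++ E₀, w₃, v, e, ?_, ?_⟩
      · rw [hA, hB]; simp
      · intro p hp
        rcases List.mem_append.mp hp with hp | hp
        · exact hadj p (by rw [hw₂]; exact List.mem_append_left _ hp)
        · exact hadj p (by rw [hw₂]; simp [hp])

/-- pushing a letter onto a stack with no shuffle pair keeps no shuffle pair -/
lemma sp_of_sp_pushR {x : V × Bool} {s : List (V × Bool)}
    (h : SP G (pushR G x s)) : SP G s := by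
  rcases pushR_cases (G := G) x s with ⟨t, r, hs, ht, hp, hr⟩ | ⟨t, r, hs, ht, hp⟩
  · rw [hp] at h
    rcases sp_middle_split h with h1 | ⟨A₁, A₂, hA, -⟩ | ⟨B₁, B₂, hB, hB₁⟩
    · rwa [← hs] at h1
    · exfalso
      have : (x.1, !x.2) ∈ t := by rw [hA]; simp
      exact G.loopless.irrefl x.1 (by simpa using ht _ this)
    · exfalso
      cases B₁ with
      | nil =>
          have := hr (x.1, !x.2) (by rw [hB]; simp)
          exact this.2 rfl
      | cons q B₁' =>
          have hq := hr q (by rw [hB]; simp)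
          exact hq.1 ((hB₁ q (by simp)).symm)
  · rw [hp] at h
    rw [hs]
    rcases sp_split h with h1 | h1 | ⟨v, e, P₁, P₂, Q₁, Q₂, hP, hQ, hP₂, hQ₁⟩
    · exact h1.append_right _
    · exact (h1.cons (linv x)).append_left t
    · refine ⟨P₁, P₂ ++ (linv x :: Q₁), Q₂, v, e, by rw [hP, hQ]; simp, ?_⟩
      intro p hp
      rcases List.mem_append.mp hp with hp | hp
      · exact hP₂ p hp
      · rcases List.mem_cons.mp hp with rfl | hp
        · have : G.Adj v x.1 := by
            have h1 : (v, e) ∈ t := by rw [hP]; simp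
            simpa using ht _ h1
          simpa using this
        · exact hQ₁ p hp

end CW
namespace CW

variable {G : SimpleGraph V}

@[simp] lemma linv_fst' (x : V × Bool) : (linv x).1 = x.1 := rfl

/-- pushing a letter and then its inverse is the identity up to shuffles,
on stacks with no shuffle pair -/
lemma pushR_pushR_linv {x : V × Bool} {s : List (V × Bool)} (hs : ¬ SP G s) :
    SE G (pushR G (linv x) (pushR G x s)) s := by
  induction s with
  | nil =>
      rw [pushR_nil, pushR_cons_del [] (by simpa using G.loopless.irrefl x.1) (by rw [linv_linv])]
      exact SE.refl _
  | cons y s ih =>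
      by_cases h : G.Adj y.1 x.1
      · rw [pushR_cons_adj s h, pushR_cons_adj _ (by simpa using h)]
        exact (ih (nosp_cons hs)).cons y
      · by_cases h2 : y = linv x
        · rw [pushR_cons_del s h h2]
          rcases pushR_cases (G := G) (linv x) s with ⟨t, r, hs', ht, hp, hr⟩ |
              ⟨t, r, hs', ht, hp⟩
          · rw [hp, h2]
            have := se_to_front (G := G) (t := t) (r := r) (x := linv x)
              (fun p hp' => (by simpa using (ht p hp').symm))
            rw [← hs'] at this
            exact this
          · exfalso
            apply hs
            rw [hs', h2]
            refine ⟨[], t, r, x.1, !x.2, ?_, ?_⟩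
            · simp [linv]
            · intro p hp'
              simpa using (ht p hp').symm
        · rw [pushR_cons_ins s h h2,
            pushR_cons_del _ (by simpa using G.loopless.irrefl x.1) (by rw [linv_linv])]
          exact SE.refl _

/-- pushes of commuting letters commute, up to shuffles -/
lemma pushR_comm {x y : V × Bool} (hxy : G.Adj x.1 y.1) (s : List (V × Bool)) :
    SE G (pushR G y (pushR G x s)) (pushR G x (pushR G y s)) := by
  induction s with
  | nil =>
      rw [pushR_nil, pushR_nil, pushR_cons_adj [] hxy, pushR_cons_adj [] hxy.symm,
        pushR_nil, pushR_nil]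
      exact SwapStep.se (show SwapStep G [x, y] [y, x] from ⟨[], [], x, y, hxy, rfl, rfl⟩)
  | cons z s ih =>
      by_cases hzx : G.Adj z.1 x.1 <;> by_cases hzy : G.Adj z.1 y.1
      · rw [pushR_cons_adj s hzx, pushR_cons_adj _ hzy, pushR_cons_adj s hzy,
          pushR_cons_adj _ hzx]
        exact ih.cons z
      · by_cases h2 : z = linv y
        · rw [pushR_cons_adj s hzx, pushR_cons_del _ hzy h2, pushR_cons_del s hzy h2]
          exact SE.refl _
        · rw [pushR_cons_adj s hzx, pushR_cons_ins _ hzy h2, pushR_cons_ins s hzy h2,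
            pushR_cons_adj _ hxy.symm, pushR_cons_adj s hzx]
          exact SE.refl _
      · by_cases h2 : z = linv x
        · rw [pushR_cons_del s hzx h2, pushR_cons_adj s hzy, pushR_cons_del _ hzx h2]
          exact SE.refl _
        · rw [pushR_cons_ins s hzx h2, pushR_cons_adj _ hxy, pushR_cons_adj s hzy,
            pushR_cons_ins _ hzx h2]
          exact SE.refl _
      · by_cases h2 : z = linv x
        · exfalso
          apply hzy
          rw [h2]
          simpa using hxy
        · by_cases h3 : z = linv y
          · exfalso
            apply hzx
            rw [h3]
            simpa using hxy.symm
          · rw [pushR_cons_ins s hzx h2, pushR_cons_ins s hzy h3,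
              pushR_cons_adj _ hxy, pushR_cons_adj _ hxy.symm,
              pushR_cons_ins s hzx h2, pushR_cons_ins s hzy h3]
            exact SwapStep.se (show SwapStep G (x :: y :: z :: s) (y :: x :: z :: s) from
              ⟨[], z :: s, x, y, hxy, rfl, rfl⟩)

/-- pushing respects single swaps, up to shuffles -/
lemma pushR_swapStep {x : V × Bool} {s s' : List (V × Bool)}
    (h : SwapStep G s s') : SE G (pushR G x s) (pushR G x s') := by
  obtain ⟨u, t, a, b, hab, rfl, rfl⟩ := h
  induction u with
  | nil =>
      simp only [List.nil_append]
      by_cases hax : G.Adj a.1 x.1 <;> by_cases hbx : G.Adj b.1 x.1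
      · rw [pushR_cons_adj _ hax, pushR_cons_adj _ hbx, pushR_cons_adj _ hbx,
          pushR_cons_adj _ hax]
        exact SwapStep.se (show SwapStep G (a :: b :: pushR G x t) (b :: a :: pushR G x t)
          from ⟨[], pushR G x t, a, b, hab, rfl, rfl⟩)
      · by_cases hbl : b = linv x
        · rw [pushR_cons_adj _ hax, pushR_cons_del t hbx hbl, pushR_cons_del _ hbx hbl]
          exact SE.refl _
        · rw [pushR_cons_adj _ hax, pushR_cons_ins t hbx hbl, pushR_cons_ins _ hbx hbl]
          refine (SwapStep.se (show SwapStep G (a :: x :: b :: t) (x :: a :: b :: t) from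
            ⟨[], b :: t, a, x, hax, rfl, rfl⟩)).trans ?_
          exact SwapStep.se (show SwapStep G (x :: a :: b :: t) (x :: b :: a :: t) from
            ⟨[x], t, a, b, hab, rfl, rfl⟩)
      · by_cases hal : a = linv x
        · rw [pushR_cons_del _ hax hal, pushR_cons_adj _ hbx, pushR_cons_del t hax hal]
          exact SE.refl _
        · rw [pushR_cons_ins _ hax hal, pushR_cons_adj _ hbx, pushR_cons_ins t hax hal]
          refine (SwapStep.se (show SwapStep G (x :: a :: b :: t) (x :: b :: a :: t) from
            ⟨[x], t, a, b, hab, rfl, rfl⟩)).trans ?_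
          exact SwapStep.se (show SwapStep G (x :: b :: a :: t) (b :: x :: a :: t) from
            ⟨[], a :: t, x, b, hbx.symm, rfl, rfl⟩)
      · by_cases hal : a = linv x
        · exact absurd (by rw [hal] at hab; simpa using hab.symm) hbx
        · by_cases hbl : b = linv x
          · exact absurd (by rw [hbl] at hab; simpa using hab) hax
          · rw [pushR_cons_ins _ hax hal, pushR_cons_ins _ hbx hbl]
            exact SwapStep.se (show SwapStep G (x :: a :: b :: t) (x :: b :: a :: t) from
              ⟨[x], t, a, b, hab, rfl, rfl⟩)
  | cons c u ih =>
      by_cases hcx : G.Adj c.1 x.1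
      · rw [List.cons_append, List.cons_append, pushR_cons_adj _ hcx, pushR_cons_adj _ hcx]
        exact ih.cons c
      · by_cases hcl : c = linv x
        · rw [List.cons_append, List.cons_append, pushR_cons_del _ hcx hcl,
            pushR_cons_del _ hcx hcl]
          exact SwapStep.se (show SwapStep G (u ++ a :: b :: t) (u ++ b :: a :: t) from
            ⟨u, t, a, b, hab, rfl, rfl⟩)
        · rw [List.cons_append, List.cons_append, pushR_cons_ins _ hcx hcl,
            pushR_cons_ins _ hcx hcl]
          exact (((SwapStep.se (show SwapStep G (u ++ a :: b :: t) (u ++ b :: a :: t) from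
            ⟨u, t, a, b, hab, rfl, rfl⟩))).cons c).cons x

/-- pushing respects shuffle equivalence -/
lemma pushR_se {x : V × Bool} {s s' : List (V × Bool)} (h : SE G s s') :
    SE G (pushR G x s) (pushR G x s') := by
  induction h with
  | refl => exact SE.refl _
  | tail _ hstep ih => exact ih.trans (pushR_swapStep hstep)

end CW
namespace CW

variable {G : SimpleGraph V}

lemma sp_length {w : List (V × Bool)} (h : SP G w) : 2 ≤ w.length := by
  obtain ⟨w₁, w₂, w₃, v, e, rfl, -⟩ := h
  simp
  omega

lemma nosp_nil : ¬ SP G ([] : List (V × Bool)) := fun h => by simpa using sp_length h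

lemma map_linv_map_linv (l : List (V × Bool)) : (l.map linv).map linv = l := by
  simp [Function.comp_def]

/-- the states: stacks with no shuffle pair -/
def NW (G : SimpleGraph V) := {l : List (V × Bool) // ¬ SP G l}

def nwSetoid (G : SimpleGraph V) : Setoid (NW G) :=
  ⟨fun s t => SE G s.1 t.1, fun _ => SE.refl _, SE.symm, SE.trans⟩

def StateQ (G : SimpleGraph V) := Quotient (nwSetoid G)

def mkQ (s : NW G) : StateQ G := Quotient.mk (nwSetoid G) s

noncomputable def pushQ (x : V × Bool) : StateQ G → StateQ G :=
  Quotient.map' (fun s : NW G => (⟨pushR G x s.1, fun h => s.2 (sp_of_sp_pushR h)⟩ : NW G))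
    (fun _ _ h => pushR_se h)

lemma pushQ_mk (x : V × Bool) (s : NW G) :
    pushQ x (mkQ s) = mkQ ⟨pushR G x s.1, fun h => s.2 (sp_of_sp_pushR h)⟩ := rfl

lemma exact_mkQ {s t : NW G} (h : mkQ s = mkQ t) : SE G s.1 t.1 :=
  Quotient.exact' h

lemma sound_mkQ {s t : NW G} (h : SE G s.1 t.1) : mkQ s = mkQ t :=
  Quotient.sound' h

noncomputable def pushE (v : V) : Equiv.Perm (StateQ G) where
  toFun := pushQ (v, false)
  invFun := pushQ (v, true)
  left_inv := by
    intro q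
    induction q using Quotient.inductionOn' with
    | h s =>
        show pushQ (v, true) (pushQ (v, false) (mkQ s)) = mkQ s
        exact sound_mkQ (pushR_pushR_linv (x := (v, false)) s.2)
  right_inv := by
    intro q
    induction q using Quotient.inductionOn' with
    | h s =>
        show pushQ (v, false) (pushQ (v, true) (mkQ s)) = mkQ s
        exact sound_mkQ (pushR_pushR_linv (x := (v, true)) s.2)

lemma pushE_commute {a b : V} (hab : G.Adj a b) :
    (pushE (G := G) a) * (pushE (G := G) b) = (pushE (G := G) b) * (pushE (G := G) a) := by
  ext q
  induction q using Quotient.inductionOn' with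
  | h s =>
      show pushQ (a, false) (pushQ (b, false) (mkQ s)) =
        pushQ (b, false) (pushQ (a, false) (mkQ s))
      exact sound_mkQ (pushR_comm (x := (b, false)) (y := (a, false)) hab.symm s.1)

open scoped commutatorElement in
noncomputable def phi (G : SimpleGraph V) : RAAG G →* Equiv.Perm (StateQ G) :=
  PresentedGroup.toGroup (f := fun v => pushE (G := G) v) (by
    rintro r ⟨a, b, hab, rfl⟩
    simp only [map_mul, map_inv, FreeGroup.lift_apply_of]
    rw [← commutatorElement_def, commutatorElement_eq_one_iff_commute]
    exact pushE_commute hab)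

lemma phi_gen (v : V) : phi G (RAAG.gen G v) = pushE (G := G) v :=
  PresentedGroup.toGroup.of _

/-- the normal-form stack of a word -/
noncomputable def stateOf (G : SimpleGraph V) (w : List (V × Bool)) : List (V × Bool) :=
  w.foldr (fun x s => pushR G (linv x) s) []

@[simp] lemma stateOf_nil : stateOf G [] = [] := rfl

lemma stateOf_cons (x : V × Bool) (w : List (V × Bool)) :
    stateOf G (x :: w) = pushR G (linv x) (stateOf G w) := rfl

lemma nosp_stateOf (w : List (V × Bool)) : ¬ SP G (stateOf G w) := by
  induction w with
  | nil => exact nosp_nil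
  | cons x w ih => exact fun h => ih (sp_of_sp_pushR h)

noncomputable def stateNW (G : SimpleGraph V) (w : List (V × Bool)) : NW G :=
  ⟨stateOf G w, nosp_stateOf w⟩

lemma phi_wordProd (w : List (V × Bool)) :
    phi G (wordProd G w) (mkQ ⟨[], nosp_nil⟩) = mkQ (stateNW G w) := by
  induction w with
  | nil =>
      rw [wordProd_nil, map_one]
      rfl
  | cons x w ih =>
      rw [wordProd_cons, map_mul]
      have : phi G (L G x) (mkQ (stateNW G w)) = mkQ (stateNW G (x :: w)) := by
        cases x with
        | mk v e =>
            cases e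
            · -- L = (gen v)⁻¹ ; phi = (pushE v)⁻¹ acts by pushQ (v,true)
              show phi G (L G (v, false)) (mkQ (stateNW G w)) = _
              rw [show L G (v, false) = (RAAG.gen G v)⁻¹ from by simp [L], map_inv, phi_gen]
              show pushQ (v, true) (mkQ (stateNW G w)) = _
              rw [pushQ_mk]
              apply sound_mkQ
              show SE G (pushR G (v, true) (stateOf G w)) (stateOf G ((v, false) :: w))
              rw [stateOf_cons]
              exact SE.refl _
            · show phi G (L G (v, true)) (mkQ (stateNW G w)) = _
              rw [show L G (v, true) = RAAG.gen G v from by simp [L], phi_gen]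
              show pushQ (v, false) (mkQ (stateNW G w)) = _
              rw [pushQ_mk]
              apply sound_mkQ
              show SE G (pushR G (v, false) (stateOf G w)) (stateOf G ((v, true) :: w))
              rw [stateOf_cons]
              exact SE.refl _
      rw [Equiv.Perm.mul_apply, ih, this]

lemma se_stateOf_of_eq {u w : List (V × Bool)} (h : wordProd G u = wordProd G w) :
    SE G (stateOf G u) (stateOf G w) := by
  have := phi_wordProd (G := G) u
  rw [h, phi_wordProd] at this
  exact (exact_mkQ this).symm

lemma stateOf_length_le (w : List (V × Bool)) :
    (stateOf G w).length ≤ w.length := by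
  induction w with
  | nil => simp
  | cons x w ih =>
      rw [stateOf_cons]
      calc (pushR G (linv x) (stateOf G w)).length ≤ (stateOf G w).length + 1 :=
            pushR_length _ _
        _ ≤ w.length + 1 := by omega
        _ = (x :: w).length := by simp

lemma wordProd_stateOf_rev (w : List (V × Bool)) :
    wordProd G (stateOf G w).reverse = (wordProd G w)⁻¹ := by
  induction w with
  | nil => simp
  | cons x w ih =>
      rw [stateOf_cons, pushR_wordProd, ih, wordProd_cons, mul_inv_rev, L_linv]

/-- a word representing the same element with the stack's length -/
lemma stateOf_word (w : List (V × Bool)) :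
    wordProd G (wordInv ((stateOf G w).reverse)) = wordProd G w ∧
      (wordInv ((stateOf G w).reverse)).length = (stateOf G w).length := by
  constructor
  · rw [wordProd_wordInv, wordProd_stateOf_rev, inv_inv]
  · rw [wordInv_length, List.length_reverse]

lemma reduced_length_stateOf {w : List (V × Bool)} (h : IsReducedWord G w) :
    w.length = (stateOf G w).length := by
  have h1 := stateOf_length_le (G := G) w
  have h2 := h (wordInv ((stateOf G w).reverse)) (stateOf_word w).1
  rw [(stateOf_word (G := G) w).2] at h2
  omega

/-- cancelling a shuffle pair -/
lemma cancel_pair {v : V} {e : Bool} {w₂ w₃ : List (V × Bool)}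
    (hadj : ∀ p ∈ w₂, G.Adj v p.1) :
    wordProd G ((v, e) :: (w₂ ++ (v, !e) :: w₃)) = wordProd G (w₂ ++ w₃) := by
  induction w₂ with
  | nil =>
      simp only [List.nil_append, wordProd_cons, ← mul_assoc]
      rw [show ((v, !e) : V × Bool) = linv (v, e) from rfl, L_linv, mul_inv_cancel, one_mul]
  | cons q w₂ ih =>
      have hq : G.Adj v q.1 := hadj q (by simp)
      have ihq := ih (fun p hp => hadj p (by simp [hp]))
      simp only [List.cons_append, wordProd_cons] at ihq ⊢
      rw [← ihq, ← mul_assoc, ← mul_assoc,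
        (L_commute (G := G) (p := (v, e)) (q := q) (by simpa using hq)).eq, mul_assoc]

lemma sp_shorter {w : List (V × Bool)} (h : SP G w) :
    ∃ w', wordProd G w' = wordProd G w ∧ w'.length + 2 = w.length := by
  obtain ⟨w₁, w₂, w₃, v, e, rfl, hadj⟩ := h
  refine ⟨w₁ ++ (w₂ ++ w₃), ?_, by simp; omega⟩
  conv_rhs => rw [wordProd_append]
  rw [cancel_pair hadj, wordProd_append]

lemma nosp_of_reduced {w : List (V × Bool)} (h : IsReducedWord G w) : ¬ SP G w := by
  intro hsp
  obtain ⟨w', hprod, hlen⟩ := sp_shorter hsp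
  have := h w' hprod
  omega

/-- main structural lemma: the stack of a word with no shuffle pair is the
reversed-inverted word, up to shuffles, and has full length -/
lemma stateOf_of_nosp {w : List (V × Bool)} (h : ¬ SP G w) :
    SE G (stateOf G w) (w.map linv) ∧ (stateOf G w).length = w.length := by
  induction w with
  | nil => exact ⟨SE.refl _, rfl⟩
  | cons x w ih =>
      obtain ⟨ihse, ihlen⟩ := ih (nosp_cons h)
      rw [stateOf_cons]
      rcases pushR_cases (G := G) (linv x) (stateOf G w) with
          ⟨t, r, hs, ht, hp, -⟩ | ⟨t, r, hs, ht, hp⟩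
      · constructor
        · rw [hp]
          have h1 : SE G (t ++ linv x :: r) (linv x :: (t ++ r)) :=
            se_to_front (fun p hp' => by simpa using (ht p hp').symm)
          rw [← hs] at h1
          refine h1.trans ?_
          show SE G (linv x :: stateOf G w) (List.map linv (x :: w))
          rw [List.map_cons]
          exact ihse.cons (linv x)
        · rw [hp]
          have h5 := congrArg List.length hs
          simp only [List.length_append] at h5
          simp only [List.length_append, List.length_cons]
          omega
      · -- cancellation would produce a shuffle pair in x :: w
        exfalso
        rw [linv_linv] at hs
        -- stateOf w = t ++ x :: r, with t all adjacent to x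
        have h1 : SE G w ((t ++ x :: r).map linv) := by
          have h0 : SE G (t ++ x :: r) (List.map linv w) := by rw [← hs]; exact ihse
          have h2 := h0.map_linv
          rw [map_linv_map_linv] at h2
          exact h2.symm
        have h3 : SE G (x :: w) (x :: ((t.map linv) ++ linv x :: (r.map linv))) := by
          have := h1.cons x
          simpa using this
        apply h
        refine h3.symm.sp ⟨[], t.map linv, r.map linv, x.1, x.2, ?_, ?_⟩
        · simp [linv]
        · intro p hp'
          simp only [List.mem_map] at hp'
          obtain ⟨q, hq, rfl⟩ := hp'
          have := ht q hq
          simpa using this.symm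

lemma reduced_of_nosp {w : List (V × Bool)} (h : ¬ SP G w) : IsReducedWord G w := by
  intro u hu
  have h1 := se_stateOf_of_eq hu
  have h2 := (stateOf_of_nosp h).2
  have h3 := stateOf_length_le (G := G) u
  have h4 := h1.length
  omega

/-- THE SHUFFLE THEOREM : two reduced words representing the same element
are related by swaps of adjacent commuting letters -/
theorem shuffle_theorem {u w : List (V × Bool)} (hu : IsReducedWord G u)
    (hw : IsReducedWord G w) (h : wordProd G u = wordProd G w) : SE G u w := by
  have h1 := se_stateOf_of_eq h
  have h2 := (stateOf_of_nosp (nosp_of_reduced hu)).1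
  have h3 := (stateOf_of_nosp (nosp_of_reduced hw)).1
  have h4 : SE G (u.map linv) (w.map linv) := (h2.symm.trans h1).trans h3
  have h5 := h4.map_linv
  rwa [map_linv_map_linv, map_linv_map_linv] at h5

end CW
namespace CW

variable {G : SimpleGraph V}

lemma nosp_wordInv {w : List (V × Bool)} (h : ¬ SP G w) : ¬ SP G (wordInv w) :=
  fun h' => h (sp_wordInv_iff.mp h')

lemma nosp_of_se {w w' : List (V × Bool)} (hse : SE G w w') (h : ¬ SP G w) : ¬ SP G w' :=
  fun h' => h (hse.symm.sp h')

/-- moving a letter to the very back -/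
lemma se_to_end {s : List (V × Bool)} {x : V × Bool}
    (hs : ∀ p ∈ s, G.Adj x.1 p.1) : SE G (x :: s) (s ++ [x]) := by
  have := (se_to_front (G := G) (t := s) (r := []) (x := x) hs).symm
  simpa using this

/-- cyclic decomposition: every word with no shuffle pair is shuffle-equivalent
to `a ++ c ++ a⁻¹` with `c ++ c` having no shuffle pair -/
lemma cyc_decomp : ∀ n (w : List (V × Bool)), w.length ≤ n → ¬ SP G w →
    ∃ a c, SE G w (a ++ (c ++ wordInv a)) ∧ ¬ SP G (c ++ c) := by
  intro n
  induction n with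
  | zero =>
      intro w hlen hw
      have : w = [] := List.length_eq_zero_iff.mp (Nat.le_zero.mp hlen)
      subst this
      exact ⟨[], [], by simpa using SE.refl _, nosp_nil⟩
  | succ n ih =>
      intro w hlen hw
      by_cases hww : SP G (w ++ w)
      · rcases sp_split hww with h1 | h1 | ⟨v, e, P₁, P₂, Q₁, Q₂, hP, hQ, hP₂, hQ₁⟩
        · exact absurd h1 hw
        · exact absurd h1 hw
        · have heq : P₁ ++ (v, e) :: P₂ = Q₁ ++ (v, !e) :: Q₂ := hP.symm.trans hQ
          rcases append_cons_split heq with ⟨E, hC, -⟩ | ⟨-, hz, -⟩ | ⟨E, hA, hD⟩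
          · exfalso
            have : (v, e) ∈ Q₁ := by rw [hC]; simp
            exact G.loopless.irrefl v (by simpa using hQ₁ _ this)
          · exfalso
            have h8 : e = !e := congrArg Prod.snd hz
            simp at h8
          · -- P₁ = Q₁ ++ (v,!e) :: E, Q₂ = E ++ (v,e) :: P₂
            -- so w = Q₁ ++ (v,!e) :: (E ++ (v,e) :: P₂)
            have hww' : w = Q₁ ++ ((v, !e) :: (E ++ (v, e) :: P₂)) := by
              rw [hP, hA]; simp
            -- move (v,!e) to the front and (v,e) to the back
            have se1 : SE G w ((v, !e) :: (Q₁ ++ (E ++ (v, e) :: P₂))) := by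
              rw [hww']
              exact se_to_front (fun p hp => by simpa using hQ₁ p hp)
            have se2 : SE G ((v, e) :: P₂) (P₂ ++ [(v, e)]) :=
              se_to_end (fun p hp => by simpa using hP₂ p hp)
            have se3 : SE G w ((v, !e) :: ((Q₁ ++ (E ++ P₂)) ++ [(v, e)])) := by
              refine se1.trans ?_
              have h4 := ((se2.append_left E).append_left Q₁).cons ((v, !e)) 
              refine h4.trans ?_
              have : (v, !e) :: (Q₁ ++ (E ++ (P₂ ++ [(v, e)]))) =
                  (v, !e) :: ((Q₁ ++ (E ++ P₂)) ++ [(v, e)]) := by simp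
              rw [this]
              exact SE.refl _
            set w' := Q₁ ++ (E ++ P₂) with hw'
            have hw'len : w'.length + 2 = w.length := by
              rw [hww', hw']; simp; omega
            have hw'nosp : ¬ SP G w' := by
              have h5 : ¬ SP G ((v, !e) :: (w' ++ [(v, e)])) := nosp_of_se se3 hw
              intro h6
              exact h5 ((h6.append_right [(v, e)]).cons (v, !e))
            obtain ⟨a', c, hse', hcc⟩ := ih w' (by omega) hw'nosp
            refine ⟨(v, !e) :: a', c, ?_, hcc⟩
            refine se3.trans ?_
            have h7 := ((hse'.append_right [(v, e)]).cons (v, !e))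
            refine h7.trans ?_
            have : (v, !e) :: ((a' ++ (c ++ wordInv a')) ++ [(v, e)]) =
                ((v, !e) :: a') ++ (c ++ wordInv ((v, !e) :: a')) := by
              rw [wordInv_cons]
              simp [linv]
            rw [this]
            exact SE.refl _
      · exact ⟨[], w, by simpa using SE.refl _, hww⟩

/-- m-fold repetition of a word -/
def repw : ℕ → List (V × Bool) → List (V × Bool)
  | 0, _ => []
  | n + 1, c => c ++ repw n c

lemma mem_repw {p : V × Bool} {c : List (V × Bool)} : ∀ {m}, p ∈ repw m c → p ∈ c := by
  intro m
  induction m with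
  | zero => intro h; simp [repw] at h
  | succ n ih =>
      intro h
      rcases List.mem_append.mp h with h | h
      · exact h
      · exact ih h

lemma repw_wordProd (c : List (V × Bool)) : ∀ m, wordProd G (repw m c) = (wordProd G c) ^ m
  | 0 => by simp [repw]
  | m + 1 => by
      rw [repw, wordProd_append, repw_wordProd c m, pow_succ']

/-- duplication lemma -/
lemma sp_reduce_dup {X c Y : List (V × Bool)} (h : SP G ((X ++ c) ++ (c ++ Y))) :
    SP G (X ++ (c ++ Y)) ∨ SP G (c ++ c) := by
  rcases sp_split h with h1 | h1 | ⟨v, e, P₁, P₂, Q₁, Q₂, hP, hQ, hP₂, hQ₁⟩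
  · left
    have := h1.append_right Y
    rwa [List.append_assoc] at this
  · exact Or.inl (h1.append_left X)
  · rcases eq_append_cons_split hP with ⟨E₁, E₂, hX, hP₁, hP₂'⟩ |
        ⟨F₁, F₂, hc, hP₁, hP₂'⟩
    · -- (v,e) in X ; P₂ = E₂ ++ c all adjacent
      rcases eq_append_cons_split hQ with ⟨K₁, K₂, hc2, hQ₁', hQ₂'⟩ |
          ⟨M₁, M₂, hY, hQ₁', hQ₂'⟩
      · -- (v,!e) in c
        left
        refine ⟨E₁, E₂ ++ K₁, K₂ ++ Y, v, e, ?_, ?_⟩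
        · rw [hX, hc2]; simp
        · intro p hp
          rcases List.mem_append.mp hp with hp | hp
          · exact hP₂ p (by rw [hP₂']; exact List.mem_append_left _ hp)
          · exact hQ₁ p (by rw [hQ₁']; exact hp)
      · -- (v,!e) in Y
        left
        refine ⟨E₁, E₂ ++ (c ++ M₁), M₂, v, e, ?_, ?_⟩
        · rw [hX, hY]; simp
        · intro p hp
          rcases List.mem_append.mp hp with hp | hp
          · exact hP₂ p (by rw [hP₂']; exact List.mem_append_left _ hp)
          · rcases List.mem_append.mp hp with hp | hp
            · exact hP₂ p (by rw [hP₂']; exact List.mem_append_right _ hp)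
            · exact hQ₁ p (by rw [hQ₁']; exact List.mem_append_right _ hp)
    · -- (v,e) in first copy of c
      rcases eq_append_cons_split hQ with ⟨K₁, K₂, hc2, hQ₁', hQ₂'⟩ |
          ⟨M₁, M₂, hY, hQ₁', hQ₂'⟩
      · -- (v,!e) in second copy of c : shuffle pair inside c ++ c
        right
        refine ⟨F₁, F₂ ++ K₁, K₂, v, e, ?_, ?_⟩
        · nth_rewrite 1 [hc]
          nth_rewrite 1 [hc2]
          simp
        · intro p hp
          rcases List.mem_append.mp hp with hp | hp
          · exact hP₂ p (by rw [hP₂']; exact hp)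
          · exact hQ₁ p (by rw [hQ₁']; exact hp)
      · -- (v,!e) in Y
        left
        refine ⟨X ++ F₁, F₂ ++ M₁, M₂, v, e, ?_, ?_⟩
        · rw [hc, hY]; simp
        · intro p hp
          rcases List.mem_append.mp hp with hp | hp
          · exact hP₂ p (by rw [hP₂']; exact hp)
          · exact hQ₁ p (by rw [hQ₁']; exact List.mem_append_right _ hp)

lemma nosp_pow {X c Y : List (V × Bool)} (h1 : ¬ SP G (X ++ (c ++ Y)))
    (h2 : ¬ SP G (c ++ c)) : ∀ m, ¬ SP G (X ++ (repw (m + 1) c ++ Y)) := by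
  intro m
  induction m with
  | zero =>
      have : X ++ (repw 1 c ++ Y) = X ++ (c ++ Y) := by simp [repw]
      rw [this]; exact h1
  | succ n ih =>
      intro hsp
      have heq : X ++ (repw (n + 2) c ++ Y) = (X ++ c) ++ (c ++ (repw n c ++ Y)) := by
        simp [repw]
      rw [heq] at hsp
      rcases sp_reduce_dup hsp with h | h
      · apply ih
        have e2 : X ++ (repw (n + 1) c ++ Y) = X ++ (c ++ (repw n c ++ Y)) := by
          simp [repw]
        rw [e2]
        exact h
      · exact h2 h

end CW
namespace CW

open List in
lemma dummy_open : True := trivial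

variable {G : SimpleGraph V}

open List

lemma sublist_insert_mid {α : Type*} {x y : α} {l W : List α} (h : l <+ y :: W) :
    l <+ y :: x :: W := by
  cases h with
  | cons _ h' => exact (h'.cons x).cons y
  | cons_cons _ h' => exact List.Sublist.cons₂ y (h'.cons x)

lemma sub_swap {x y : V} (hxy : G.Adj x y) {l U W : List V}
    (hl : l <+ U ++ x :: y :: W)
    (hch : l.Chain' (fun p q => p ≠ q ∧ ¬ G.Adj p q)) : l <+ U ++ y :: x :: W := by
  obtain ⟨l₁, l₂, rfl, h₁, h₂⟩ := List.sublist_append_iff.mp hl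
  refine List.Sublist.append h₁ ?_
  cases h₂ with
  | cons _ h' => exact sublist_insert_mid h'
  | cons_cons _ h' =>
      cases h' with
      | cons _ h'' => exact ((h''.cons₂ x)).cons y
      | cons_cons _ h'' =>
          exfalso
          rename_i l₄
          have hinf : [x, y] <:+: (l₁ ++ x :: y :: l₄) := ⟨l₁, l₄, by simp⟩
          have hp := hch.infix hinf
          rw [List.isChain_pair] at hp
          exact hp.2 hxy

lemma contractionSeq_swapStep {B : Set V} {w w' : List (V × Bool)} (h : SwapStep G w w')
    (hseq : IsContractionSeq G B (w.map Prod.fst)) :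
    IsContractionSeq G B (w'.map Prod.fst) := by
  obtain ⟨u, t, a, b, hab, rfl, rfl⟩ := h
  intro b₀ hb₀ b₁ hb₁
  obtain ⟨l, hsub, hh, hl, hch⟩ := hseq b₀ hb₀ b₁ hb₁
  refine ⟨l, ?_, hh, hl, hch⟩
  have hsub' : l <+ u.map Prod.fst ++ a.1 :: b.1 :: t.map Prod.fst := by simpa using hsub
  have := sub_swap hab hsub' hch
  simpa using this

lemma contractionSeq_se {B : Set V} {w w' : List (V × Bool)} (h : SE G w w')
    (hseq : IsContractionSeq G B (w.map Prod.fst)) :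
    IsContractionSeq G B (w'.map Prod.fst) := by
  induction h with
  | refl => exact hseq
  | tail _ hstep ih => exact contractionSeq_swapStep hstep ih

lemma contractionSeq_wordInv {B : Set V} {w : List (V × Bool)}
    (hseq : IsContractionSeq G B (w.map Prod.fst)) :
    IsContractionSeq G B ((wordInv w).map Prod.fst) := by
  intro b₀ hb₀ b₁ hb₁
  obtain ⟨l, hsub, hh, hl, hch⟩ := hseq b₁ hb₁ b₀ hb₀
  refine ⟨l.reverse, ?_, ?_, ?_, ?_⟩
  · rw [map_fst_wordInv]; exact hsub.reverse
  · rw [List.head?_reverse]; exact hl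
  · rw [List.getLast?_reverse]; exact hh
  · show List.IsChain _ _
    rw [List.isChain_reverse]
    exact hch.imp (fun a b h' => ⟨h'.1.symm, fun ha => h'.2 ha.symm⟩)

lemma contraction_word_pow {B : Set V} {g : RAAG G} {w₀ : List (V × Bool)}
    (hred : IsReducedWord G w₀) (hB : ∀ p ∈ w₀, p.1 ∈ B)
    (hseq : IsContractionSeq G B (w₀.map Prod.fst)) (hprod : wordProd G w₀ = g)
    (k : ℕ) (hk : 1 ≤ k) :
    ∃ u, IsContractionWord G B u ∧ wordProd G u = g ^ k := by
  obtain ⟨a, c, hse, hcc⟩ := cyc_decomp w₀.length w₀ le_rfl (nosp_of_reduced hred)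
  have hnospbase : ¬ SP G (a ++ (c ++ wordInv a)) := nosp_of_se hse (nosp_of_reduced hred)
  obtain ⟨m, rfl⟩ : ∃ m, k = m + 1 := ⟨k - 1, by omega⟩
  refine ⟨a ++ (repw (m + 1) c ++ wordInv a), ⟨?_, ?_, ?_⟩, ?_⟩
  · exact reduced_of_nosp (nosp_pow hnospbase hcc m)
  · -- letters in B
    have hmemBbase : ∀ p ∈ a ++ (c ++ wordInv a), p.1 ∈ B :=
      fun p hp => hB p (hse.perm.mem_iff.mpr hp)
    intro p hp
    rcases List.mem_append.mp hp with hp | hp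
    · exact hmemBbase p (List.mem_append_left _ hp)
    rcases List.mem_append.mp hp with hp | hp
    · exact hmemBbase p (List.mem_append_right _ (List.mem_append_left _ (mem_repw hp)))
    · exact hmemBbase p (List.mem_append_right _ (List.mem_append_right _ hp))
  · -- contraction sequence
    have hseqbase : IsContractionSeq G B ((a ++ (c ++ wordInv a)).map Prod.fst) :=
      contractionSeq_se hse hseq
    have hsubl : a ++ (c ++ wordInv a) <+ a ++ (repw (m + 1) c ++ wordInv a) := by
      refine List.Sublist.append_left ?_ a
      have h2 : c ++ wordInv a <+ c ++ (repw m c ++ wordInv a) :=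
        List.Sublist.append_left (List.sublist_append_right _ _) c
      have h3 : repw (m + 1) c ++ wordInv a = c ++ (repw m c ++ wordInv a) := by
        simp [repw]
      rw [h3]
      exact h2
    intro b₀ hb₀ b₁ hb₁
    obtain ⟨l, hsub, hh, hl, hch⟩ := hseqbase b₀ hb₀ b₁ hb₁
    exact ⟨l, hsub.trans (hsubl.map Prod.fst), hh, hl, hch⟩
  · -- the product
    have hprodbase : wordProd G (a ++ (c ++ wordInv a)) = g := by
      rw [← hprod]; exact hse.wordProd.symm
    have hAC : g = wordProd G a * wordProd G c * (wordProd G a)⁻¹ := by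
      rw [← hprodbase, wordProd_append, wordProd_append, wordProd_wordInv, mul_assoc]
    rw [wordProd_append, wordProd_append, wordProd_wordInv, repw_wordProd, hAC, conj_pow,
      ← mul_assoc]

end CW

open CW in
theorem power_of_contraction_element' {V : Type*} (G : SimpleGraph V) (B : Set V)
    (hB : Anticonnected G B) (g : RAAG G) (hg : IsContractionElem G B g)
    (m : ℤ) (hm : m ≠ 0) :
    (∀ w : List (V × Bool), IsReducedWord G w → wordProd G w = g ^ m →
      IsContractionWord G B w) ∧
    IsContractionElem G B (g ^ m) := by
  classical
  obtain ⟨w₀, ⟨hred, hmem, hseq⟩, hprod⟩ := hg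
  have key : ∃ u, IsContractionWord G B u ∧ wordProd G u = g ^ m := by
    rcases lt_trichotomy m 0 with hneg | hzero | hpos
    · obtain ⟨u, hu, hup⟩ := contraction_word_pow hred hmem hseq hprod (-m).toNat (by omega)
      refine ⟨wordInv u, ⟨reduced_of_nosp (nosp_wordInv (nosp_of_reduced hu.1)),
        fun p hp => ?_, contractionSeq_wordInv hu.2.2⟩, ?_⟩
      · obtain ⟨q, hq, rfl⟩ := mem_wordInv.mp hp
        simpa using hu.2.1 q hq
      · rw [wordProd_wordInv, hup, ← zpow_natCast, ← zpow_neg]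
        congr 1
        omega
    · exact absurd hzero hm
    · obtain ⟨u, hu, hup⟩ := contraction_word_pow hred hmem hseq hprod m.toNat (by omega)
      refine ⟨u, hu, ?_⟩
      rw [hup, ← zpow_natCast]
      congr 1
      omega
  obtain ⟨u, hu, hup⟩ := key
  constructor
  · intro w hwred hwprod
    have hsew : SE G u w := shuffle_theorem hu.1 hwred (hup.trans hwprod.symm)
    exact ⟨hwred, fun p hp => hu.2.1 p (hsew.perm.mem_iff.mpr hp),
      contractionSeq_se hsew hu.2.2⟩
  · exact ⟨u, hu, hup⟩

theorem power_of_contraction_element {V : Type*} (G : SimpleGraph V) (B : Set V)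
    (hB : Anticonnected G B) (g : RAAG G) (hg : IsContractionElem G B g)
    (m : ℤ) (hm : m ≠ 0) :
    (∀ w : List (V × Bool), IsReducedWord G w → wordProd G w = g ^ m →
      IsContractionWord G B w) ∧
    IsContractionElem G B (g ^ m) :=
  power_of_contraction_element' G B hB g hg m hm
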